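/- For each m ≥ 1 and any norm ‖·‖_m on ℂ^{2m}, there exist constants D_m > 0 and d_m > 0 such that for every c = (c_{−m},...,c_{−1},c_1,...,c_m) ∈ ℂ^{2m} with ‖c‖_m = 1 and every δ > 0, the Lebesgue measure of {x ∈ 𝕋 : |∑_{0<|l|≤m} c_l e(lx)| < δ} is less than D_m δ^{d_m}, where e(x) = exp(2πix). -/

import Mathlib

/-!
Multiplying by `e(mx)` turns the trigonometric polynomial into `Q(e(x))`, where `Q` is a
polynomial of degree at most `2m` whose coefficients are the `c_l`. Writing `Q = a ∏ (X - z)`,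
a point `u` of the unit circle at distance `≥ t` from every root satisfies
`|u - z| ≥ (t/2) max(1, |z|)` for each root, hence `|Q(u)| ≥ (t/2)^{2m} M(Q)` with `M` the Mahler
measure. Every coefficient is at most `2^{2m} M(Q)`, and `1 = nrm c ≤ K ‖c‖_∞` with
`K = ∑ nrm(e_i)`, so `M(Q) ≥ (4^m K)⁻¹`. Thus `|Q(e(x))| < δ` forces `e(x)` to lie within
`t ≍ δ^{1/2m}` of one of the at most `2m` roots, and each such arc has measure `≤ t` because a
chord is at least four times the arc length.
-/

open MeasureTheory Real Polynomial

open Finset in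
theorem Seminorm.le_sum_apply_single_mul_norm {𝕜 ι : Type*} [NormedField 𝕜] [Fintype ι]
    [DecidableEq ι] (p : Seminorm 𝕜 (ι → 𝕜)) (c : ι → 𝕜) :
    p c ≤ (∑ i, p (Pi.single i 1)) * ‖c‖ :=
  calc p c = p (∑ i, c i • Pi.single i 1) := by rw [← pi_eq_sum_univ' c]
    _ ≤ ∑ i, p (c i • Pi.single i 1) :=
      le_sum_of_subadditive p (map_zero p).le (map_add_le_add p) _ _
    _ = ∑ i, ‖c i‖ * p (Pi.single i 1) := by simp only [map_smul_eq_mul]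
    _ ≤ ∑ i, ‖c‖ * p (Pi.single i 1) :=
      sum_le_sum fun i _ => mul_le_mul_of_nonneg_right (norm_le_pi_norm c i) (apply_nonneg p _)
    _ = (∑ i, p (Pi.single i 1)) * ‖c‖ := by rw [← mul_sum, mul_comm]

theorem Complex.norm_exp_two_pi_I_mul_ofReal (x : ℝ) :
    ‖Complex.exp (2 * π * Complex.I * x)‖ = 1 := by
  simp [Complex.norm_exp]

theorem four_mul_norm_coe_le_norm_exp_sub_one (x : ℝ) :
    4 * ‖(x : UnitAddCircle)‖ ≤ ‖Complex.exp (2 * π * Complex.I * x) - 1‖ := by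
  set v := x - round x
  have hv : |v| ≤ 1 / 2 := abs_sub_round x
  have hexp : Complex.exp (2 * π * Complex.I * x) = Complex.exp (Complex.I * ↑(2 * π * v)) := by
    rw [show 2 * π * Complex.I * x = Complex.I * ↑(2 * π * v) + round x * (2 * π * Complex.I) by
      push_cast [v]; ring, Complex.exp_add, Complex.exp_int_mul_two_pi_mul_I, mul_one]
  have hjordan : 2 / π * |π * v| ≤ |sin (π * v)| :=
    mul_abs_le_abs_sin (by rw [abs_mul, abs_of_pos pi_pos]; nlinarith [pi_pos])
  rw [abs_mul, abs_of_pos pi_pos, ← mul_assoc, div_mul_cancel₀ _ pi_pos.ne'] at hjordan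
  rw [UnitAddCircle.norm_eq, hexp, Complex.norm_exp_I_mul_ofReal_sub_one, norm_mul,
    Real.norm_eq_abs, Real.norm_eq_abs, abs_two, show 2 * π * v / 2 = π * v by ring]
  linarith

theorem UnitAddCircle.volume_setOf_Ico_coe_mem {U : Set UnitAddCircle} (hU : MeasurableSet U) :
    volume {x ∈ Set.Ico (0 : ℝ) 1 | (x : UnitAddCircle) ∈ U} = volume U := by
  rw [AddCircle.add_projection_respects_measure 1 0 hU, zero_add, Set.inter_comm]
  exact measure_congr (Ico_ae_eq_Ioc.inter (ae_eq_refl _))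

theorem volume_setOf_norm_exp_sub_lt_le (z : ℂ) (t : ℝ) :
    volume {x ∈ Set.Ico (0 : ℝ) 1 | ‖Complex.exp (2 * π * Complex.I * x) - z‖ < t}
      ≤ ENNReal.ofReal t := by
  set A := {x ∈ Set.Ico (0 : ℝ) 1 | ‖Complex.exp (2 * π * Complex.I * x) - z‖ < t}
  rcases A.eq_empty_or_nonempty with hA | ⟨x₀, -, hx₀⟩
  · simp [hA]
  -- two points of `A` are at chord distance `< 2t`, hence at circle distance `< t / 2`
  have hsub : A ⊆ {x ∈ Set.Ico (0 : ℝ) 1 |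
      (x : UnitAddCircle) ∈ Metric.closedBall (x₀ : UnitAddCircle) (t / 2)} := by
    rintro x ⟨hx, hxz⟩
    refine ⟨hx, ?_⟩
    rw [Metric.mem_closedBall, dist_eq_norm, ← AddCircle.coe_sub]
    have hrot : Complex.exp (2 * π * Complex.I * x) - Complex.exp (2 * π * Complex.I * x₀)
        = Complex.exp (2 * π * Complex.I * x₀)
          * (Complex.exp (2 * π * Complex.I * ↑(x - x₀)) - 1) := by
      rw [mul_sub, mul_one, ← Complex.exp_add]
      push_cast
      ring_nf
    have := calc 4 * ‖((x - x₀ : ℝ) : UnitAddCircle)‖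
        ≤ ‖Complex.exp (2 * π * Complex.I * ↑(x - x₀)) - 1‖ :=
          four_mul_norm_coe_le_norm_exp_sub_one _
      _ = ‖Complex.exp (2 * π * Complex.I * x) - Complex.exp (2 * π * Complex.I * x₀)‖ := by
          rw [hrot, norm_mul, Complex.norm_exp_two_pi_I_mul_ofReal, one_mul]
      _ ≤ ‖Complex.exp (2 * π * Complex.I * x) - z‖
            + ‖Complex.exp (2 * π * Complex.I * x₀) - z‖ := by
          simpa [norm_sub_rev z] using norm_sub_le_norm_sub_add_norm_sub
            (Complex.exp (2 * π * Complex.I * x)) z (Complex.exp (2 * π * Complex.I * x₀))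
      _ < 2 * t := by linarith
    linarith
  calc volume A ≤ _ := measure_mono hsub
    _ = ENNReal.ofReal (min 1 (2 * (t / 2))) := by
      rw [UnitAddCircle.volume_setOf_Ico_coe_mem Metric.isClosed_closedBall.measurableSet,
        AddCircle.volume_closedBall]
    _ ≤ ENNReal.ofReal t :=
      ENNReal.ofReal_le_ofReal (by linarith [min_le_right (1 : ℝ) (2 * (t / 2))])

theorem Polynomial.norm_eval_eq_mul_prod_roots (Q : ℂ[X]) (u : ℂ) :
    ‖Q.eval u‖ = ‖Q.leadingCoeff‖ * (Q.roots.map fun z => ‖u - z‖).prod := by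
  rw [(IsAlgClosed.splits Q).eval_eq_prod_roots, norm_mul]
  simpa [Multiset.map_map] using
    congrArg (‖Q.leadingCoeff‖ * ·) (map_multiset_prod (normHom : ℂ →*₀ ℝ) (Q.roots.map (u - ·)))

theorem Polynomial.norm_coeff_le_two_pow_mul_mahlerMeasure {Q : ℂ[X]} {n : ℕ}
    (hdeg : Q.natDegree ≤ n) (k : ℕ) : ‖Q.coeff k‖ ≤ 2 ^ n * Q.mahlerMeasure := by
  refine (norm_coeff_le_choose_mul_mahlerMeasure k Q).trans
    (mul_le_mul_of_nonneg_right ?_ (mahlerMeasure_nonneg Q))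
  exact_mod_cast (Nat.choose_le_two_pow _ _).trans (Nat.pow_le_pow_right two_pos hdeg)

theorem Polynomial.exists_mem_roots_norm_sub_lt {Q : ℂ[X]} {n : ℕ} (hdeg : Q.natDegree ≤ n)
    {u : ℂ} (hu : ‖u‖ = 1) {t : ℝ} (ht₀ : 0 ≤ t) (ht₁ : t ≤ 1)
    (hQu : ‖Q.eval u‖ < (t / 2) ^ n * Q.mahlerMeasure) : ∃ z ∈ Q.roots, ‖u - z‖ < t := by
  by_contra! hfar
  have hroot : ∀ z ∈ Q.roots, t / 2 * max 1 ‖z‖ ≤ ‖u - z‖ := by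
    intro z hz
    rcases le_total ‖z‖ 2 with hz2 | hz2
    · nlinarith [hfar z hz, max_le (by norm_num : (1 : ℝ) ≤ 2) hz2]
    · have hzu : ‖z‖ - 1 ≤ ‖u - z‖ := by simpa [hu, norm_sub_rev] using norm_sub_norm_le z u
      rw [max_eq_right (by linarith)]
      nlinarith
  have hlow : (t / 2) ^ n * Q.mahlerMeasure ≤ ‖Q.eval u‖ := calc
    (t / 2) ^ n * Q.mahlerMeasure ≤ (t / 2) ^ Q.roots.card * Q.mahlerMeasure :=
      mul_le_mul_of_nonneg_right
        (pow_le_pow_of_le_one (by positivity) (by linarith) ((card_roots' Q).trans hdeg))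
        (mahlerMeasure_nonneg Q)
    _ = ‖Q.leadingCoeff‖ * (Q.roots.map fun z => t / 2 * max 1 ‖z‖).prod := by
      rw [mahlerMeasure_eq_leadingCoeff_mul_prod_roots, Multiset.prod_map_mul,
        Multiset.map_const', Multiset.prod_replicate]
      ring
    _ ≤ ‖Q.leadingCoeff‖ * (Q.roots.map fun z => ‖u - z‖).prod :=
      mul_le_mul_of_nonneg_left
        (Multiset.prod_map_le_prod_map₀ _ _ (fun z _ => by positivity) hroot) (norm_nonneg _)
    _ = ‖Q.eval u‖ := (norm_eval_eq_mul_prod_roots Q u).symm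
  linarith

theorem Polynomial.volume_setOf_norm_eval_exp_lt_le {Q : ℂ[X]} (hQ : Q ≠ 0) {n : ℕ}
    (hn : n ≠ 0) (hdeg : Q.natDegree ≤ n) {δ : ℝ} (hδ : 0 ≤ δ) :
    volume {x ∈ Set.Ico (0 : ℝ) 1 | ‖Q.eval (Complex.exp (2 * π * Complex.I * x))‖ < δ}
      ≤ ENNReal.ofReal (2 * n * (δ / Q.mahlerMeasure) ^ (n⁻¹ : ℝ)) := by
  set t := 2 * (δ / Q.mahlerMeasure) ^ (n⁻¹ : ℝ)
  have hM := mahlerMeasure_pos_of_ne_zero hQ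
  have ht₀ : 0 ≤ t := by positivity
  have htδ : (t / 2) ^ n * Q.mahlerMeasure = δ := by
    rw [mul_div_cancel_left₀ _ two_ne_zero, ← Real.rpow_natCast, ← Real.rpow_mul (by positivity),
      inv_mul_cancel₀ (by exact_mod_cast hn), Real.rpow_one, div_mul_cancel₀ _ hM.ne']
  rw [show 2 * (n : ℝ) * _ = n * t by ring]
  rcases le_or_gt t 1 with ht₁ | ht₁
  · calc volume _
        ≤ volume (⋃ z ∈ Q.roots.toFinset,
            {x ∈ Set.Ico (0 : ℝ) 1 | ‖Complex.exp (2 * π * Complex.I * x) - z‖ < t}) := by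
          refine measure_mono fun x ⟨hx, hQx⟩ => ?_
          obtain ⟨z, hz, hxz⟩ := exists_mem_roots_norm_sub_lt hdeg
            (Complex.norm_exp_two_pi_I_mul_ofReal x) ht₀ ht₁ (htδ ▸ hQx)
          exact Set.mem_biUnion (Multiset.mem_toFinset.2 hz) ⟨hx, hxz⟩
      _ ≤ ∑ z ∈ Q.roots.toFinset, ENNReal.ofReal t :=
          (measure_biUnion_finset_le _ _).trans
            (Finset.sum_le_sum fun z _ => volume_setOf_norm_exp_sub_lt_le z t)
      _ = ENNReal.ofReal (Q.roots.toFinset.card * t) := by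
          rw [Finset.sum_const, nsmul_eq_mul, ENNReal.ofReal_mul (Nat.cast_nonneg _),
            ENNReal.ofReal_natCast]
      _ ≤ ENNReal.ofReal (n * t) := by
          refine ENNReal.ofReal_le_ofReal (mul_le_mul_of_nonneg_right ?_ ht₀)
          exact_mod_cast (Multiset.toFinset_card_le _).trans ((card_roots' Q).trans hdeg)
  · calc volume _ ≤ volume (Set.Ico (0 : ℝ) 1) := measure_mono (Set.sep_subset _ _)
      _ = ENNReal.ofReal 1 := by simp
      _ ≤ ENNReal.ofReal (n * t) := by
          have : (1 : ℝ) ≤ n := by exact_mod_cast Nat.one_le_iff_ne_zero.2 hn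
          exact ENNReal.ofReal_le_ofReal (by nlinarith)

theorem Polynomial.volume_setOf_norm_eval_exp_lt_lt {Q : ℂ[X]} {n : ℕ} (hn : n ≠ 0)
    (hdeg : Q.natDegree ≤ n) {L : ℝ} (hL : 1 ≤ L * Q.mahlerMeasure) {δ : ℝ} (hδ : 0 < δ) :
    volume {x ∈ Set.Ico (0 : ℝ) 1 | ‖Q.eval (Complex.exp (2 * π * Complex.I * x))‖ < δ}
      < ENNReal.ofReal (4 * n * L ^ (n⁻¹ : ℝ) * δ ^ (n⁻¹ : ℝ)) := by
  have hQ : Q ≠ 0 := fun h => by norm_num [h] at hL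
  have hM := mahlerMeasure_pos_of_ne_zero hQ
  have hL₀ : 0 < L := pos_of_mul_pos_left (one_pos.trans_le hL) hM.le
  have hδM : δ / Q.mahlerMeasure ≤ L * δ := by
    rw [div_le_iff₀ hM]
    nlinarith
  calc volume _ ≤ ENNReal.ofReal (2 * n * (δ / Q.mahlerMeasure) ^ (n⁻¹ : ℝ)) :=
        volume_setOf_norm_eval_exp_lt_le hQ hn hdeg hδ.le
    _ ≤ ENNReal.ofReal (2 * n * (L * δ) ^ (n⁻¹ : ℝ)) := by gcongr
    _ < ENNReal.ofReal (4 * n * L ^ (n⁻¹ : ℝ) * δ ^ (n⁻¹ : ℝ)) := by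
        have : 0 < n * (L ^ (n⁻¹ : ℝ) * δ ^ (n⁻¹ : ℝ)) := by
          have : 0 < n := Nat.pos_of_ne_zero hn
          positivity
        rw [ENNReal.ofReal_lt_ofReal_iff (by positivity), Real.mul_rpow hL₀.le hδ.le]
        linarith

/-- Index `i` carries the frequency `l = i - m` (for `i < m`) or `l = i - m + 1` (for `i ≥ m`);
this is `l + m`, which ranges over `[0, 2m] \ {m}`. -/
def shiftedFrequency (m : ℕ) (i : Fin (2 * m)) : ℕ := if (i : ℕ) < m then i else i + 1

theorem shiftedFrequency_injective (m : ℕ) : Function.Injective (shiftedFrequency m) := by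
  intro i j h
  simp only [shiftedFrequency] at h
  split_ifs at h <;> exact Fin.ext (by omega)

theorem shiftedFrequency_le (m : ℕ) (i : Fin (2 * m)) : shiftedFrequency m i ≤ 2 * m := by
  unfold shiftedFrequency; split_ifs <;> omega

theorem shiftedFrequency_cast (m : ℕ) (i : Fin (2 * m)) :
    (shiftedFrequency m i : ℝ)
      = (if (i : ℕ) < m then ((i : ℕ) : ℝ) - m else ((i : ℕ) : ℝ) - m + 1) + m := by
  unfold shiftedFrequency; split_ifs <;> push_cast <;> ring

noncomputable def shiftedPolynomial (m : ℕ) (c : Fin (2 * m) → ℂ) : ℂ[X] :=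
  ∑ i, monomial (shiftedFrequency m i) (c i)

theorem coeff_shiftedPolynomial (m : ℕ) (c : Fin (2 * m) → ℂ) (i : Fin (2 * m)) :
    (shiftedPolynomial m c).coeff (shiftedFrequency m i) = c i := by
  rw [shiftedPolynomial, finsetSum_coeff, Finset.sum_eq_single i]
  · exact coeff_monomial_same _ _
  · exact fun j _ hji => coeff_monomial_of_ne _ ((shiftedFrequency_injective m).ne hji).symm
  · simp

theorem natDegree_shiftedPolynomial_le (m : ℕ) (c : Fin (2 * m) → ℂ) :
    (shiftedPolynomial m c).natDegree ≤ 2 * m :=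
  natDegree_sum_le_of_forall_le _ _ fun i _ =>
    (natDegree_monomial_le _).trans (shiftedFrequency_le m i)

theorem norm_le_two_pow_mul_mahlerMeasure_shiftedPolynomial (m : ℕ) (c : Fin (2 * m) → ℂ) :
    ‖c‖ ≤ 2 ^ (2 * m) * (shiftedPolynomial m c).mahlerMeasure := by
  refine (pi_norm_le_iff_of_nonneg (mul_nonneg (by positivity) (mahlerMeasure_nonneg _))).2
    fun i => ?_
  rw [← coeff_shiftedPolynomial m c i]
  exact norm_coeff_le_two_pow_mul_mahlerMeasure (natDegree_shiftedPolynomial_le m c) _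

theorem norm_sum_exp_eq_norm_eval_shiftedPolynomial (m : ℕ) (c : Fin (2 * m) → ℂ) (x : ℝ) :
    ‖∑ i : Fin (2 * m), c i * Complex.exp (2 * (π : ℂ) * Complex.I *
        (((if (i : ℕ) < m then ((i : ℕ) : ℝ) - m else ((i : ℕ) : ℝ) - m + 1) : ℝ) : ℂ) * (x : ℂ))‖
      = ‖(shiftedPolynomial m c).eval (Complex.exp (2 * π * Complex.I * x))‖ := by
  have hshift : (shiftedPolynomial m c).eval (Complex.exp (2 * π * Complex.I * x))
      = Complex.exp (2 * π * Complex.I * x) ^ m * ∑ i : Fin (2 * m), c i *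
        Complex.exp (2 * (π : ℂ) * Complex.I *
          (((if (i : ℕ) < m then ((i : ℕ) : ℝ) - m else ((i : ℕ) : ℝ) - m + 1) : ℝ) : ℂ)
            * (x : ℂ)) := by
    rw [shiftedPolynomial, eval_finsetSum, Finset.mul_sum]
    refine Finset.sum_congr rfl fun i _ => ?_
    rw [eval_monomial, mul_left_comm, ← Complex.exp_nat_mul, ← Complex.exp_nat_mul,
      ← Complex.exp_add]
    congr 2
    have := congrArg ((↑) : ℝ → ℂ) (shiftedFrequency_cast m i)
    push_cast at this ⊢
    rw [this]
    ring
  rw [hshift, norm_mul, norm_pow, Complex.norm_exp_two_pi_I_mul_ofReal, one_pow, one_mul]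

/-- Anti-concentration for trigonometric polynomials: for each `m ≥ 1` and any norm on
`ℂ^{2m}`, there are `D_m, d_m > 0` such that every zero-mean trigonometric polynomial
`∑_{0<|l|≤m} c_l e(lx)` with unit-norm coefficient vector satisfies
`λ{x ∈ 𝕋 : |∑ c_l e(lx)| < δ} < D_m δ^{d_m}`. -/
theorem stmt_11 (m : ℕ) (hm : 1 ≤ m)
    (nrm : (Fin (2 * m) → ℂ) → ℝ)
    (hnrm_zero : ∀ c, nrm c = 0 ↔ c = 0)
    (hnrm_add : ∀ c₁ c₂, nrm (c₁ + c₂) ≤ nrm c₁ + nrm c₂)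
    (hnrm_smul : ∀ (a : ℂ) c, nrm (a • c) = ‖a‖ * nrm c) :
    ∃ D : ℝ, 0 < D ∧ ∃ dm : ℝ, 0 < dm ∧
      ∀ c : Fin (2 * m) → ℂ, nrm c = 1 → ∀ δ : ℝ, 0 < δ →
        volume {x ∈ Set.Ico (0 : ℝ) 1 |
          ‖(∑ i : Fin (2 * m),
            c i * Complex.exp (2 * (π : ℂ) * Complex.I *
              (((if (i : ℕ) < m then ((i : ℕ) : ℝ) - m else ((i : ℕ) : ℝ) - m + 1) : ℝ) : ℂ)
              * (x : ℂ)))‖ < δ}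
          < ENNReal.ofReal (D * δ ^ dm) := by
  classical
  let p : Seminorm ℂ (Fin (2 * m) → ℂ) := Seminorm.of nrm hnrm_add hnrm_smul
  set K := ∑ i, p (Pi.single i 1)
  have hK : 0 < K := Finset.sum_pos
    (fun i _ => (apply_nonneg p _).lt_of_ne fun h => by simpa using (hnrm_zero _).1 h.symm)
    ⟨⟨0, by omega⟩, Finset.mem_univ _⟩
  refine ⟨4 * (2 * m : ℕ) * (2 ^ (2 * m) * K) ^ (((2 * m : ℕ) : ℝ)⁻¹), by positivity,
    ((2 * m : ℕ) : ℝ)⁻¹, by positivity, fun c hc δ hδ => ?_⟩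
  have hKM : 1 ≤ 2 ^ (2 * m) * K * (shiftedPolynomial m c).mahlerMeasure := calc
    1 = p c := hc.symm
    _ ≤ K * ‖c‖ := p.le_sum_apply_single_mul_norm c
    _ ≤ K * (2 ^ (2 * m) * (shiftedPolynomial m c).mahlerMeasure) :=
      mul_le_mul_of_nonneg_left (norm_le_two_pow_mul_mahlerMeasure_shiftedPolynomial m c) hK.le
    _ = 2 ^ (2 * m) * K * (shiftedPolynomial m c).mahlerMeasure := by ring
  simp_rw [norm_sum_exp_eq_norm_eval_shiftedPolynomial]
  exact volume_setOf_norm_eval_exp_lt_lt (by omega) (natDegree_shiftedPolynomial_le m c) hKM hδ
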